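/- Let $A$ be a dilation matrix, $b = |\det A|$, and let $a \in L^1(\mathbb{R}^d)$ be an $H^1_A$-atom supported in $\Delta_k = A^k(\Delta)$, i.e. $\|a\|_\infty \le |\Delta_k|^{-1}$ and $\int a = 0$. Let $\rho_*$ be the quasi-norm associated with $A^*$ and $\zeta_- = \ln\lambda_- /\ln b$ where $\lambda_- > 1$ is a lower bound for the eigenvalue moduli of $A$. Then $|\widehat{a}(\xi)| \lesssim b^{k\zeta_-}\rho_*(\xi)^{\zeta_-}$ whenever $\rho_*(\xi) \le b^{-k}$, with implicit constant independent of $a$, $k$, $\xi$. -/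

import Mathlib

/-!
Since `∫ a = 0`, `â(ξ) = ∫ (e^{-2πi x·ξ} - 1) a(x) dx`, and `|e^{-2πiθ} - 1| ≤ 2π|θ|` together
with `‖a‖₁ ≤ 1` give `|â(ξ)| ≤ 2π sup_{x ∈ Δ_k} |x·ξ|`. For `x = A^k y` with `y ∈ Δ` one has
`x·ξ = y·(Aᵀ)^k ξ`. If `ρ_*(ξ) = b^j`, then `ξ ∈ (Aᵀ)^{j+1} Δ_*` and `j ≤ -k`, so
`(Aᵀ)^k ξ ∈ Aᵀ (Aᵀ)^{-m} Δ_*` with `m = -(k+j) ≥ 0`. The eigenvalues of `(Aᵀ)⁻¹` have modulus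
`< λ₋⁻¹`, so Gelfand's formula gives `‖(Aᵀ)^{-m}‖ ≲ λ₋^{-m}`, and `λ₋^{-m} = b^{kζ₋} ρ_*(ξ)^{ζ₋}`
because `b^{ζ₋} = λ₋` (here `b ≥ λ₋^d > 1`). The same decay shows that every `ξ ≠ 0` lies in some
annulus `(Aᵀ)^{j+1} Δ_* \ (Aᵀ)^j Δ_*`, so `ρ_*(ξ)` is indeed such a power `b^j`.
-/

open MeasureTheory Matrix

/-- The open Euclidean unit ball in `ℝᵈ`. -/
def eucBall (d : ℕ) : Set (Fin d → ℝ) := {x | ∑ i, x i ^ 2 < 1}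

/-- The Fourier transform `f̂(ξ) = ∫ f(x) e^{-2πi x·ξ} dx` on `ℝᵈ`. -/
noncomputable def ft {d : ℕ} (f : (Fin d → ℝ) → ℂ) (ξ : Fin d → ℝ) : ℂ :=
  ∫ x : Fin d → ℝ, Complex.exp (-(2 * Real.pi * Complex.I) * (∑ i, x i * ξ i)) * f x

open Filter Topology Real

-- Matrices carry the ℓ∞ operator norm, the one compatible with the sup norm on `n → ℝ`.
attribute [local instance] Matrix.linftyOpNormedAddCommGroup Matrix.linftyOpNormedRing
  Matrix.linftyOpNormedAlgebra

lemma isOpen_eucBall (d : ℕ) : IsOpen (eucBall d) :=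
  isOpen_lt (by fun_prop) continuous_const

lemma zero_mem_eucBall (d : ℕ) : (0 : Fin d → ℝ) ∈ eucBall d := by
  simp [eucBall]

lemma norm_le_one_of_mem_eucBall {d : ℕ} {u : Fin d → ℝ} (hu : u ∈ eucBall d) : ‖u‖ ≤ 1 := by
  refine (pi_norm_le_iff_of_nonneg zero_le_one).mpr fun i => ?_
  have hi : u i ^ 2 < 1 :=
    (Finset.single_le_sum (fun j _ => sq_nonneg (u j)) (Finset.mem_univ i)).trans_lt hu
  rw [Real.norm_eq_abs]
  exact (sq_lt_one_iff_abs_lt_one _).mp hi |>.le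

lemma abs_dotProduct_le {ι : Type*} [Fintype ι] (x y : ι → ℝ) :
    |x ⬝ᵥ y| ≤ Fintype.card ι * ‖x‖ * ‖y‖ := by
  calc |∑ i, x i * y i| ≤ ∑ i, |x i * y i| := Finset.abs_sum_le_sum_abs _ _
    _ ≤ ∑ _i : ι, ‖x‖ * ‖y‖ := by
        refine Finset.sum_le_sum fun i _ => ?_
        rw [abs_mul]
        exact mul_le_mul (norm_le_pi_norm x i) (norm_le_pi_norm y i) (abs_nonneg _) (norm_nonneg _)
    _ = Fintype.card ι * ‖x‖ * ‖y‖ := by simp [mul_assoc]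

lemma neg_two_pi_I_mul_ofReal_eq (t : ℝ) :
    -(2 * π * Complex.I) * t = ((-(2 * π * t) : ℝ) : ℂ) * Complex.I := by
  push_cast
  ring

lemma norm_exp_neg_two_pi_I_mul (t : ℝ) : ‖Complex.exp (-(2 * π * Complex.I) * t)‖ = 1 := by
  rw [neg_two_pi_I_mul_ofReal_eq, Complex.norm_exp_ofReal_mul_I]

lemma norm_exp_neg_two_pi_I_mul_sub_one_le (t : ℝ) :
    ‖Complex.exp (-(2 * π * Complex.I) * t) - 1‖ ≤ 2 * π * |t| := by
  have h := Real.norm_exp_I_mul_ofReal_sub_one_le (x := -(2 * π * t))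
  rwa [Real.norm_eq_abs, abs_neg, abs_mul, abs_of_pos two_pi_pos, mul_comm Complex.I,
    ← neg_two_pi_I_mul_ofReal_eq] at h

lemma ft_eq_integral_dotProduct {d : ℕ} (f : (Fin d → ℝ) → ℂ) (ξ : Fin d → ℝ) :
    ft f ξ = ∫ x, Complex.exp (-(2 * π * Complex.I) * (x ⬝ᵥ ξ : ℝ)) * f x := by
  simp only [ft, dotProduct, Complex.ofReal_sum, Complex.ofReal_mul]

lemma norm_ft_le_of_integral_eq_zero {d : ℕ} {a : (Fin d → ℝ) → ℂ} (ha : Integrable a)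
    (ha0 : ∫ x, a x = 0) {ξ : Fin d → ℝ} {R : ℝ}
    (hR : ∀ x ∈ Function.support a, |x ⬝ᵥ ξ| ≤ R) :
    ‖ft a ξ‖ ≤ 2 * π * R * ∫ x, ‖a x‖ := by
  set e : (Fin d → ℝ) → ℂ := fun x => Complex.exp (-(2 * π * Complex.I) * (x ⬝ᵥ ξ : ℝ))
  have hint : Integrable (fun x => (e x - 1) * a x) :=
    ha.bdd_mul (c := 2) (by fun_prop) (Eventually.of_forall fun x =>
      (norm_sub_le _ _).trans (by simp only [e, norm_exp_neg_two_pi_I_mul, norm_one]; norm_num))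
  have hft : ft a ξ = ∫ x, (e x - 1) * a x := by
    rw [ft_eq_integral_dotProduct, ← add_zero (∫ x, (e x - 1) * a x), ← ha0,
      ← integral_add hint ha]
    simp only [sub_one_mul, sub_add_cancel, e]
  rw [hft, ← integral_const_mul]
  refine norm_integral_le_of_norm_le (ha.norm.const_mul _) (Eventually.of_forall fun x => ?_)
  by_cases hx : a x = 0
  · simp [hx]
  rw [norm_mul]
  gcongr
  exact (norm_exp_neg_two_pi_I_mul_sub_one_le _).trans
    (mul_le_mul_of_nonneg_left (hR x hx) two_pi_pos.le)

lemma integral_norm_le_one_of_norm_le_inv_measure {X E : Type*} [MeasurableSpace X]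
    [NormedAddCommGroup E] {μ : Measure X} {a : X → E} {S : Set X}
    (hS : Function.support a ⊆ S) (ha : ∀ᵐ x ∂μ, ‖a x‖ ≤ (μ S).toReal⁻¹) :
    ∫ x, ‖a x‖ ∂μ ≤ 1 := by
  -- if `μ S = ∞`, the junk value `(μ S).toReal⁻¹ = 0` forces `a = 0` a.e.
  rcases eq_top_or_lt_top (μ S) with hinf | hfin
  · rw [hinf, ENNReal.toReal_top, _root_.inv_zero] at ha
    exact (integral_eq_zero_of_ae (ha.mono fun x hx => le_antisymm hx (norm_nonneg _))).trans_le
      zero_le_one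
  calc ∫ x, ‖a x‖ ∂μ = ‖∫ x in S, ‖a x‖ ∂μ‖ := by
        rw [setIntegral_eq_integral_of_forall_compl_eq_zero fun x hx => by
          rw [Function.notMem_support.mp fun h => hx (hS h), norm_zero]]
        exact (Real.norm_of_nonneg (integral_nonneg fun _ => norm_nonneg _)).symm
    _ ≤ (μ S).toReal⁻¹ * μ.real S :=
        norm_setIntegral_le_of_norm_le_const_ae hfin (ae_restrict_of_ae (by simpa using ha))
    _ ≤ 1 := inv_mul_le_one_of_le₀ le_rfl ENNReal.toReal_nonneg

lemma norm_ft_le_of_atom {d : ℕ} {a : (Fin d → ℝ) → ℂ} {S : Set (Fin d → ℝ)}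
    (ha : Integrable a) (hS : Function.support a ⊆ S)
    (hbdd : ∀ᵐ x, ‖a x‖ ≤ (volume S).toReal⁻¹) (ha0 : ∫ x, a x = 0) {ξ : Fin d → ℝ} {R : ℝ}
    (hR0 : 0 ≤ R) (hR : ∀ x ∈ S, |x ⬝ᵥ ξ| ≤ R) : ‖ft a ξ‖ ≤ 2 * π * R :=
  (norm_ft_le_of_integral_eq_zero ha ha0 fun x hx => hR x (hS hx)).trans
    (mul_le_of_le_one_right (by positivity) (integral_norm_le_one_of_norm_le_inv_measure hS hbdd))

lemma exists_norm_pow_le_mul_pow {𝔸 : Type*} [NormedRing 𝔸] [NormedAlgebra ℂ 𝔸] [CompleteSpace 𝔸]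
    (a : 𝔸) {r : ℝ} (hr : 0 < r) (h : ∀ z ∈ spectrum ℂ a, ‖z‖ < r) :
    ∃ C > 0, ∀ n : ℕ, ‖a ^ n‖ ≤ C * r ^ n := by
  have hrad : spectralRadius ℂ a < ENNReal.ofReal r := by
    rcases (spectrum ℂ a).eq_empty_or_nonempty with he | hne
    · simpa [spectralRadius, he] using hr
    · refine spectrum.spectralRadius_lt_of_forall_lt_of_nonempty hne fun z hz => ?_
      rw [← NNReal.coe_lt_coe, coe_nnnorm, Real.coe_toNNReal _ hr.le]
      exact h z hz
  have hev : ∀ᶠ n : ℕ in atTop, ‖a ^ n‖ ≤ r ^ n := by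
    have hgelfand := spectrum.pow_norm_pow_one_div_tendsto_nhds_spectralRadius a
    filter_upwards [hgelfand.eventually_lt_const hrad, eventually_ne_atTop 0] with n hn hn0
    rw [ENNReal.ofReal_lt_ofReal_iff hr, one_div, Real.rpow_inv_lt_iff_of_pos (norm_nonneg _) hr.le
      (by positivity), Real.rpow_natCast] at hn
    exact hn.le
  obtain ⟨C, hC, hbound⟩ := Asymptotics.bound_of_isBigO_nat_atTop
    (Asymptotics.IsBigO.of_bound' (hev.mono fun n hn => hn.trans (le_abs_self _)) :
      (fun n => a ^ n) =O[atTop] fun n => r ^ n)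
  refine ⟨C, hC, fun n => ?_⟩
  simpa [abs_of_pos hr] using hbound (pow_ne_zero n hr.ne')

lemma exists_mem_succ_diff_of_monotone {X : Type*} {S : ℤ → Set X} (hS : Monotone S) {x : X}
    (hin : ∃ m, x ∈ S m) (hout : ∃ m, x ∉ S m) : ∃ j, x ∈ S (j + 1) \ S j := by
  obtain ⟨m₀, hm₀⟩ := hout
  obtain ⟨j₀, hj₀, hleast⟩ := Int.exists_least_of_bdd
    ⟨m₀ + 1, fun z hz => by by_contra! h; exact hm₀ (hS (by omega : z ≤ m₀) hz)⟩ hin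
  exact ⟨j₀ - 1, by simpa using hj₀, fun h => by have := hleast _ h; omega⟩

lemma rpow_intCast_mul_log_div_log {b t : ℝ} (hb : 1 < b) (ht : 0 < t) (k : ℤ) :
    b ^ ((k : ℝ) * (log t / log b)) = t ^ k := by
  rw [mul_comm, Real.rpow_mul (by linarith), ← Real.logb, Real.rpow_logb (by linarith) hb.ne' ht,
    Real.rpow_intCast]

lemma rpow_mul_log_div_log_mul_zpow_rpow {b t : ℝ} (hb : 1 < b) (ht : 0 < t) {k j : ℤ} {m : ℕ}
    (hm : k + j = -m) : b ^ ((k : ℝ) * (log t / log b)) * (b ^ j) ^ (log t / log b) = t⁻¹ ^ m := by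
  rw [← Real.rpow_intCast b j, ← Real.rpow_mul (by linarith), rpow_intCast_mul_log_div_log hb ht,
    rpow_intCast_mul_log_div_log hb ht, ← zpow_add₀ ht.ne', hm, _root_.zpow_neg, zpow_natCast,
    inv_pow]

namespace Matrix

variable {n : Type*} [Fintype n] [DecidableEq n]

lemma mem_mulVec_image_iff {R : Type*} [CommRing R] {M : Matrix n n R} (hM : IsUnit M.det)
    {U : Set (n → R)} {x : n → R} : x ∈ M.mulVec '' U ↔ M⁻¹ *ᵥ x ∈ U := by
  constructor
  · rintro ⟨y, hy, rfl⟩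
    rwa [mulVec_mulVec, nonsing_inv_mul _ hM, one_mulVec]
  · exact fun hx => ⟨M⁻¹ *ᵥ x, hx, by rw [mulVec_mulVec, mul_nonsing_inv _ hM, one_mulVec]⟩

lemma mem_zpow_mulVec_image_iff {R : Type*} [CommRing R] {M : Matrix n n R} (hM : IsUnit M.det)
    (k : ℤ) {U : Set (n → R)} {x : n → R} : x ∈ (M ^ k).mulVec '' U ↔ M ^ (-k) *ᵥ x ∈ U := by
  rw [mem_mulVec_image_iff (hM.det_zpow k), zpow_neg hM]

lemma isOpen_mulVec_image {M : Matrix n n ℝ} (hM : IsUnit M.det) {U : Set (n → ℝ)}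
    (hU : IsOpen U) : IsOpen (M.mulVec '' U) := by
  have hpre : M.mulVec '' U = (M⁻¹).mulVec ⁻¹' U := Set.ext fun _ => mem_mulVec_image_iff hM
  exact hpre ▸ hU.preimage (continuous_const.matrix_mulVec continuous_id)

lemma monotone_zpow_mulVec_image {R : Type*} [CommRing R] {M : Matrix n n R} (hM : IsUnit M.det)
    {S : Set (n → R)} (hS : S ⊆ M.mulVec '' S) :
    Monotone fun k : ℤ => (M ^ k).mulVec '' S := by
  refine monotone_int_of_le_succ fun k => ?_
  rintro _ ⟨y, hy, rfl⟩
  obtain ⟨z, hz, rfl⟩ := hS hy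
  exact ⟨z, hz, by rw [mulVec_mulVec, ← zpow_add_one hM]⟩

lemma map_nonsing_inv {R S : Type*} [CommRing R] [CommRing S] (f : R →+* S) {M : Matrix n n R}
    (hM : IsUnit M.det) : M⁻¹.map f = (M.map f)⁻¹ := by
  refine (inv_eq_right_inv ?_).symm
  rw [← RingHom.mapMatrix_apply, ← RingHom.mapMatrix_apply, ← map_mul, mul_nonsing_inv _ hM,
    map_one]

lemma det_map_ofReal (A : Matrix n n ℝ) : (A.map Complex.ofReal).det = A.det :=
  (RingHom.map_det Complex.ofRealHom A).symm

lemma spectrum_transpose {K : Type*} [Field K] (M : Matrix n n K) :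
    spectrum K Mᵀ = spectrum K M := by
  ext z
  rw [mem_spectrum_iff_isRoot_charpoly, mem_spectrum_iff_isRoot_charpoly, charpoly_transpose]

lemma mem_spectrum_nonsing_inv_iff {K : Type*} [Field K] {M : Matrix n n K} (hM : IsUnit M.det)
    {z : K} : z ∈ spectrum K M⁻¹ ↔ z⁻¹ ∈ spectrum K M := by
  have hu : IsUnit M := (isUnit_iff_isUnit_det M).mpr hM
  rw [← hu.unit_spec, ← coe_units_inv, ← spectrum.map_inv, Set.mem_inv]

lemma norm_map_ofReal (M : Matrix n n ℝ) : ‖M.map Complex.ofReal‖ = ‖M‖ := by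
  simp [linfty_opNorm_def]

lemma exists_norm_pow_le_mul_pow_of_spectrum (M : Matrix n n ℝ) {r : ℝ} (hr : 0 < r)
    (h : ∀ z ∈ spectrum ℂ (M.map Complex.ofReal), ‖z‖ < r) :
    ∃ C > 0, ∀ k : ℕ, ‖M ^ k‖ ≤ C * r ^ k := by
  obtain ⟨C, hC, hbound⟩ := exists_norm_pow_le_mul_pow _ hr h
  refine ⟨C, hC, fun k => ?_⟩
  have hmap : (M ^ k).map Complex.ofReal = M.map Complex.ofReal ^ k :=
    map_pow Complex.ofRealHom.mapMatrix M k
  rw [← norm_map_ofReal, hmap]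
  exact hbound k

lemma pow_card_le_norm_det (B : Matrix n n ℂ) {t : ℝ} (ht : 0 ≤ t)
    (h : ∀ z ∈ spectrum ℂ B, t ≤ ‖z‖) : t ^ Fintype.card n ≤ ‖B.det‖ := by
  have hcard : Multiset.card B.charpoly.roots = Fintype.card n := by
    rw [← (IsAlgClosed.splits B.charpoly).natDegree_eq_card_roots, charpoly_natDegree_eq_dim]
  have hroots : ∀ x ∈ B.charpoly.roots.map nnnormHom, t.toNNReal ≤ x := by
    simp only [Multiset.mem_map, forall_exists_index, and_imp]
    rintro _ z hz rfl
    rw [Real.toNNReal_le_iff_le_coe]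
    exact h z (mem_spectrum_iff_isRoot_charpoly.mpr (Polynomial.isRoot_of_mem_roots hz))
  have hprod := Multiset.pow_card_le_prod hroots
  rw [Multiset.card_map, hcard, ← map_multiset_prod, ← det_eq_prod_roots_charpoly] at hprod
  rw [← Real.coe_toNNReal t ht]
  exact_mod_cast hprod

lemma one_lt_abs_det [Nonempty n] (A : Matrix n n ℝ) {t : ℝ} (ht : 1 < t)
    (h : ∀ z ∈ spectrum ℂ (A.map Complex.ofReal), t < ‖z‖) : 1 < |A.det| := by
  have hdet : ‖(A.map Complex.ofReal).det‖ = |A.det| := by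
    rw [det_map_ofReal, Complex.norm_real, Real.norm_eq_abs]
  calc 1 < t ^ Fintype.card n := one_lt_pow₀ ht Fintype.card_ne_zero
    _ ≤ |A.det| := hdet ▸ pow_card_le_norm_det _ (by linarith) fun z hz => (h z hz).le

lemma exists_norm_transpose_zpow_neg_le {A : Matrix n n ℝ} (hA : IsUnit A.det) {t : ℝ}
    (ht : 0 < t) (h : ∀ z ∈ spectrum ℂ (A.map Complex.ofReal), t < ‖z‖) :
    ∃ C > 0, ∀ k : ℕ, ‖Aᵀ ^ (-(k : ℤ))‖ ≤ C * t⁻¹ ^ k := by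
  have hAT : IsUnit Aᵀ.det := by rwa [det_transpose]
  have hmap : Aᵀ⁻¹.map Complex.ofReal = (A.map Complex.ofReal)ᵀ⁻¹ := by
    rw [← transpose_map]
    exact map_nonsing_inv Complex.ofRealHom hAT
  have hdet : IsUnit (A.map Complex.ofReal)ᵀ.det := by
    rw [det_transpose, det_map_ofReal]
    exact hA.map Complex.ofRealHom
  obtain ⟨C, hC, hbound⟩ := exists_norm_pow_le_mul_pow_of_spectrum Aᵀ⁻¹ (inv_pos.mpr ht)
    fun z hz => by
      rw [hmap, mem_spectrum_nonsing_inv_iff hdet, spectrum_transpose] at hz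
      have hz' := h _ hz
      rw [norm_inv] at hz'
      exact (lt_inv_comm₀ ht (inv_pos.mp (ht.trans hz'))).mp hz'
  refine ⟨C, hC, fun k => ?_⟩
  rw [zpow_neg_natCast, ← inv_pow']
  exact hbound k

lemma mulVec_image_eucBall_mem_nhds {d : ℕ} {M : Matrix (Fin d) (Fin d) ℝ} (hM : IsUnit M.det) :
    M.mulVec '' eucBall d ∈ 𝓝 0 :=
  (isOpen_mulVec_image hM (isOpen_eucBall d)).mem_nhds ⟨0, zero_mem_eucBall d, mulVec_zero M⟩

lemma norm_le_of_mem_mulVec_image_eucBall {d : ℕ} {M : Matrix (Fin d) (Fin d) ℝ}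
    {x : Fin d → ℝ} (hx : x ∈ M.mulVec '' eucBall d) : ‖x‖ ≤ ‖M‖ := by
  obtain ⟨u, hu, rfl⟩ := hx
  exact (linfty_opNorm_mulVec M u).trans
    (mul_le_of_le_one_right (norm_nonneg M) (norm_le_one_of_mem_eucBall hu))

lemma exists_mem_zpow_mulVec_image_succ_diff {M : Matrix n n ℝ} (hM : IsUnit M.det)
    {S : Set (n → ℝ)} (hnest : S ⊆ M.mulVec '' S) (hS0 : S ∈ 𝓝 0) {R : ℝ}
    (hSR : ∀ s ∈ S, ‖s‖ ≤ R) {C r : ℝ} (hr0 : 0 ≤ r) (hr1 : r < 1)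
    (hdecay : ∀ k : ℕ, ‖M ^ (-(k : ℤ))‖ ≤ C * r ^ k) {ξ : n → ℝ} (hξ : ξ ≠ 0) :
    ∃ j : ℤ, ξ ∈ (M ^ (j + 1)).mulVec '' S \ (M ^ j).mulVec '' S := by
  have hlim : Tendsto (fun k : ℕ => C * r ^ k) atTop (𝓝 0) := by
    simpa using (tendsto_pow_atTop_nhds_zero_of_lt_one hr0 hr1).const_mul C
  have hbound : ∀ (k : ℕ) (v : n → ℝ), ‖M ^ (-(k : ℤ)) *ᵥ v‖ ≤ C * r ^ k * ‖v‖ := fun k v =>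
    (linfty_opNorm_mulVec _ v).trans (mul_le_mul_of_nonneg_right (hdecay k) (norm_nonneg v))
  refine exists_mem_succ_diff_of_monotone (monotone_zpow_mulVec_image hM hnest) ?_ ?_
  · have hto0 : Tendsto (fun k : ℕ => M ^ (-(k : ℤ)) *ᵥ ξ) atTop (𝓝 0) :=
      squeeze_zero_norm (fun k => hbound k ξ) (by simpa using hlim.mul_const ‖ξ‖)
    obtain ⟨k, hk⟩ := (hto0.eventually hS0).exists
    exact ⟨k, (mem_zpow_mulVec_image_iff hM _).mpr hk⟩
  · have hlimR : Tendsto (fun k : ℕ => C * r ^ k * R) atTop (𝓝 0) := by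
      simpa only [zero_mul] using hlim.mul_const R
    obtain ⟨k, hk⟩ := (hlimR.eventually_lt_const (norm_pos_iff.mpr hξ)).exists
    refine ⟨-(k : ℤ), ?_⟩
    rintro ⟨s, hs, rfl⟩
    have hC : 0 ≤ C * r ^ k := (norm_nonneg _).trans (hdecay k)
    exact hk.not_ge ((hbound k s).trans (mul_le_mul_of_nonneg_left (hSR s hs) hC))

end Matrix

lemma abs_dotProduct_le_of_mem_dilates {d : ℕ} {A P Ps : Matrix (Fin d) (Fin d) ℝ}
    (hA : IsUnit A.det) {C r : ℝ} (hdecay : ∀ k : ℕ, ‖Aᵀ ^ (-(k : ℤ))‖ ≤ C * r ^ k)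
    {k j : ℤ} {m : ℕ} (hm : k + j = -m) {x ξ : Fin d → ℝ}
    (hx : x ∈ (A ^ k).mulVec '' (P.mulVec '' eucBall d))
    (hξ : ξ ∈ (Aᵀ ^ (j + 1)).mulVec '' (Ps.mulVec '' eucBall d)) :
    |x ⬝ᵥ ξ| ≤ d * ‖P‖ * ‖Aᵀ‖ * ‖Ps‖ * C * r ^ m := by
  have hAT : IsUnit Aᵀ.det := by rwa [det_transpose]
  obtain ⟨y, hy, rfl⟩ := hx
  obtain ⟨η, hη, rfl⟩ := hξ
  have hswap : (A ^ k *ᵥ y) ⬝ᵥ (Aᵀ ^ (j + 1) *ᵥ η) = ((Aᵀ * Aᵀ ^ (-(m : ℤ))) *ᵥ η) ⬝ᵥ y := by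
    rw [dotProduct_comm, dotProduct_mulVec, ← mulVec_transpose, transpose_zpow, mulVec_mulVec,
      ← zpow_add hAT, show k + (j + 1) = 1 + -(m : ℤ) by omega, zpow_add hAT, zpow_one]
  have hC : 0 ≤ C * r ^ m := (norm_nonneg _).trans (hdecay m)
  have hη' : ‖(Aᵀ * Aᵀ ^ (-(m : ℤ))) *ᵥ η‖ ≤ ‖Aᵀ‖ * (C * r ^ m) * ‖Ps‖ :=
    calc ‖(Aᵀ * Aᵀ ^ (-(m : ℤ))) *ᵥ η‖ ≤ ‖Aᵀ * Aᵀ ^ (-(m : ℤ))‖ * ‖η‖ := linfty_opNorm_mulVec _ _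
      _ ≤ ‖Aᵀ‖ * ‖Aᵀ ^ (-(m : ℤ))‖ * ‖η‖ := by gcongr; exact norm_mul_le _ _
      _ ≤ ‖Aᵀ‖ * (C * r ^ m) * ‖Ps‖ := by
          gcongr
          exacts [hdecay m, norm_le_of_mem_mulVec_image_eucBall hη]
  calc |(A ^ k *ᵥ y) ⬝ᵥ (Aᵀ ^ (j + 1) *ᵥ η)|
      ≤ Fintype.card (Fin d) * ‖(Aᵀ * Aᵀ ^ (-(m : ℤ))) *ᵥ η‖ * ‖y‖ := hswap ▸ abs_dotProduct_le _ _
    _ ≤ d * (‖Aᵀ‖ * (C * r ^ m) * ‖Ps‖) * ‖P‖ := by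
        rw [Fintype.card_fin]
        have := norm_le_of_mem_mulVec_image_eucBall hy
        gcongr
    _ = d * ‖P‖ * ‖Aᵀ‖ * ‖Ps‖ * C * r ^ m := by ring

theorem stmt_9_general (d : ℕ) (A : Matrix (Fin d) (Fin d) ℝ) (hA : IsUnit A.det)
    (b : ℝ) (hb : b = |A.det|)
    -- the ellipsoid of `A` and its dilates
    (P : Matrix (Fin d) (Fin d) ℝ)
    (Δ : Set (Fin d → ℝ)) (hΔ : Δ = P.mulVec '' eucBall d)
    (Δk : ℤ → Set (Fin d → ℝ)) (hΔk : ∀ k : ℤ, Δk k = (A ^ k).mulVec '' Δ)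
    -- the ellipsoid of the adjoint `Aᵀ` and the associated step quasi-norm `ρ_*`
    (Ps : Matrix (Fin d) (Fin d) ℝ) (hPs : IsUnit Ps.det)
    (Δs : Set (Fin d → ℝ)) (hΔs : Δs = Ps.mulVec '' eucBall d)
    (hnests : Δs ⊆ Aᵀ.mulVec '' Δs)
    (Δsk : ℤ → Set (Fin d → ℝ)) (hΔsk : ∀ k : ℤ, Δsk k = (Aᵀ ^ k).mulVec '' Δs)
    (ρs : (Fin d → ℝ) → ℝ) (hρs0 : ρs 0 = 0)
    (hρs : ∀ (k : ℤ) (ξ : Fin d → ℝ), ξ ∈ Δsk (k + 1) \ Δsk k → ρs ξ = b ^ k)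
    -- eigenvalue lower bound and `ζ₋`
    (lamm : ℝ) (hlamm : 1 < lamm)
    (hlow : ∀ z ∈ spectrum ℂ (A.map (Complex.ofReal)), lamm < ‖z‖)
    (zm : ℝ) (hzm : zm = Real.log lamm / Real.log b) :
    ∃ C : ℝ, 0 < C ∧ ∀ (k : ℤ) (a : (Fin d → ℝ) → ℂ),
      Integrable a volume →
      (Function.support a ⊆ Δk k) →
      (∀ᵐ x ∂volume, ‖a x‖ ≤ (volume (Δk k)).toReal⁻¹) →
      (∫ x, a x) = 0 →
      ∀ ξ : Fin d → ℝ, ρs ξ ≤ b ^ (-k : ℤ) →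
        ‖ft a ξ‖ ≤ C * b ^ ((k : ℝ) * zm) * ρs ξ ^ zm := by
  subst hΔ hΔs
  have hAT : IsUnit Aᵀ.det := by rwa [det_transpose]
  have hlamm0 : 0 < lamm := by linarith
  obtain ⟨C, hC, hdecay⟩ := exists_norm_transpose_zpow_neg_le hA hlamm0 hlow
  refine ⟨2 * π * (d * ‖P‖ * ‖Aᵀ‖ * ‖Ps‖ * C) + 1, by positivity, ?_⟩
  intro k a ha hsupp hbdd ha0 ξ hξ
  have hb0 : 0 < b := hb ▸ abs_pos.mpr hA.ne_zero
  rcases eq_or_ne ξ 0 with rfl | hξ0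
  · refine (norm_ft_le_of_atom ha hsupp hbdd ha0 le_rfl fun x _ => by simp).trans ?_
    rw [mul_zero, hρs0]
    positivity
  have : Nonempty (Fin d) := not_isEmpty_iff.mp fun _ => hξ0 (Subsingleton.elim _ _)
  have hb1 : 1 < b := hb ▸ one_lt_abs_det A hlamm hlow
  obtain ⟨j, hj⟩ := exists_mem_zpow_mulVec_image_succ_diff hAT hnests
    (mulVec_image_eucBall_mem_nhds hPs) (fun _ => norm_le_of_mem_mulVec_image_eucBall)
    (inv_nonneg.mpr hlamm0.le) (inv_lt_one_of_one_lt₀ hlamm) hdecay hξ0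
  have hρ : ρs ξ = b ^ j := hρs j ξ (by simpa only [hΔsk] using hj)
  obtain ⟨m, hm⟩ : ∃ m : ℕ, k + j = -m :=
    ⟨(-(k + j)).toNat, by have := (zpow_le_zpow_iff_right₀ hb1).mp (hρ ▸ hξ); omega⟩
  calc ‖ft a ξ‖ ≤ 2 * π * (d * ‖P‖ * ‖Aᵀ‖ * ‖Ps‖ * C * lamm⁻¹ ^ m) :=
        norm_ft_le_of_atom ha hsupp hbdd ha0 (by positivity) fun x hx =>
          abs_dotProduct_le_of_mem_dilates hA hdecay hm (hΔk k ▸ hx) hj.1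
    _ ≤ (2 * π * (d * ‖P‖ * ‖Aᵀ‖ * ‖Ps‖ * C) + 1) * lamm⁻¹ ^ m := by
        rw [← mul_assoc (2 * π)]
        gcongr
        linarith
    _ = _ := by rw [hρ, hzm, mul_assoc (_ + 1), rpow_mul_log_div_log_mul_zpow_rpow hb1 hlamm0 hm]

/-- Bownik–Wang Fourier decay of anisotropic `H¹_A`-atoms: if `a` is an atom supported in
`Δ_k = A^k(Δ)` and `ρ_*` is the step quasi-norm built from the nested ellipsoids of `A^*`,
then `|â(ξ)| ≲ b^{kζ₋} ρ_*(ξ)^{ζ₋}` whenever `ρ_*(ξ) ≤ b^{-k}`, uniformly in `a, k, ξ`. -/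
theorem stmt_9 (d : ℕ) (A : Matrix (Fin d) (Fin d) ℝ) (hA : IsUnit A.det)
    (hspec : ∀ z ∈ spectrum ℂ (A.map (Complex.ofReal)), 1 < ‖z‖)
    (b : ℝ) (hb : b = |A.det|)
    -- the ellipsoid of `A` and its dilates
    (P : Matrix (Fin d) (Fin d) ℝ) (hP : IsUnit P.det)
    (Δ : Set (Fin d → ℝ)) (hΔ : Δ = P.mulVec '' eucBall d)
    (hnest : Δ ⊆ A.mulVec '' Δ)
    (Δk : ℤ → Set (Fin d → ℝ)) (hΔk : ∀ k : ℤ, Δk k = (A ^ k).mulVec '' Δ)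
    -- the ellipsoid of the adjoint `Aᵀ` and the associated step quasi-norm `ρ_*`
    (Ps : Matrix (Fin d) (Fin d) ℝ) (hPs : IsUnit Ps.det)
    (Δs : Set (Fin d → ℝ)) (hΔs : Δs = Ps.mulVec '' eucBall d)
    (hnests : Δs ⊆ Aᵀ.mulVec '' Δs)
    (Δsk : ℤ → Set (Fin d → ℝ)) (hΔsk : ∀ k : ℤ, Δsk k = (Aᵀ ^ k).mulVec '' Δs)
    (ρs : (Fin d → ℝ) → ℝ) (hρs0 : ρs 0 = 0)
    (hρs : ∀ (k : ℤ) (ξ : Fin d → ℝ), ξ ∈ Δsk (k + 1) \ Δsk k → ρs ξ = b ^ k)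
    -- eigenvalue lower bound and `ζ₋`
    (lamm : ℝ) (hlamm : 1 < lamm)
    (hlow : ∀ z ∈ spectrum ℂ (A.map (Complex.ofReal)), lamm < ‖z‖)
    (zm : ℝ) (hzm : zm = Real.log lamm / Real.log b) :
    ∃ C : ℝ, 0 < C ∧ ∀ (k : ℤ) (a : (Fin d → ℝ) → ℂ),
      Integrable a volume →
      (Function.support a ⊆ Δk k) →
      (∀ᵐ x ∂volume, ‖a x‖ ≤ (volume (Δk k)).toReal⁻¹) →
      (∫ x, a x) = 0 →
      ∀ ξ : Fin d → ℝ, ρs ξ ≤ b ^ (-k : ℤ) →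
        ‖ft a ξ‖ ≤ C * b ^ ((k : ℝ) * zm) * ρs ξ ^ zm :=
  stmt_9_general d A hA b hb P Δ hΔ Δk hΔk Ps hPs Δs hΔs hnests Δsk hΔsk ρs hρs0 hρs lamm hlamm hlow
    zm hzm
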